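/- Let $f, g : \mathbb{R} \to \mathbb{R}$ be real-analytic functions such that $\cos(f(t)) = \cos(g(t))$ for all $t$ in a nonempty open interval $I$. Then either there exists an integer $p$ such that $f(t) = g(t) + 2p\pi$ for all $t \in I$, or there exists an integer $p$ such that $f(t) = -g(t) + 2p\pi$ for all $t \in I$. -/

import Mathlib

/-!
Since `cos f - cos g = -2 sin ((f + g) / 2) sin ((f - g) / 2)`, the product of the two analytic
functions `sin ((f ± g) / 2)` vanishes on the interval, so by the identity theorem one of them
vanishes identically. Then `f + g` or `f - g` is a continuous function with values in the discrete
set `2πℤ`, hence constant on the connected interval.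
-/

open Set Topology

theorem AnalyticOnNhd.eqOn_zero_or_eqOn_zero_of_mul_eq_zero {𝕜 E : Type*}
    [NontriviallyNormedField 𝕜] [NormedAddCommGroup E] [NormedSpace 𝕜 E]
    {F G : E → 𝕜} {U : Set E} (hF : AnalyticOnNhd 𝕜 F U) (hG : ContinuousOn G U)
    (hU : IsOpen U) (hU' : IsPreconnected U) (hFG : ∀ x ∈ U, F x * G x = 0) :
    EqOn F 0 U ∨ EqOn G 0 U := by
  by_cases hGz : EqOn G 0 U
  · exact Or.inr hGz
  obtain ⟨x₀, hx₀, hGx₀⟩ : ∃ x₀ ∈ U, G x₀ ≠ 0 := by simpa [EqOn] using hGz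
  have hU₀ : U ∈ 𝓝 x₀ := hU.mem_nhds hx₀
  have hFx₀ : F =ᶠ[𝓝 x₀] 0 := by
    filter_upwards [hU₀, (hG.continuousAt hU₀).eventually_ne hGx₀] with x hxU hGx
    exact (mul_eq_zero.mp (hFG x hxU)).resolve_right hGx
  exact Or.inl (hF.eqOn_zero_of_preconnected_of_eventuallyEq_zero hU' hx₀ hFx₀)

theorem IsPreconnected.exists_forall_eq_int_mul_of_mem_zmultiples {X : Type*}
    [TopologicalSpace X] {S : Set X} (hS : IsPreconnected S) {h : X → ℝ}
    (hc : ContinuousOn h S) {c : ℝ} (hz : ∀ t ∈ S, h t ∈ AddSubgroup.zmultiples c) :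
    ∃ p : ℤ, ∀ t ∈ S, h t = p * c := by
  have hdisc : IsDiscrete (AddSubgroup.zmultiples c : Set ℝ) :=
    isDiscrete_iff_discreteTopology.mpr
      (inferInstanceAs (DiscreteTopology (AddSubgroup.zmultiples c)))
  obtain ⟨y, hy, hhy⟩ := hS.eqOn_const_of_mapsTo hdisc hc hz ⟨0, zero_mem _⟩
  obtain ⟨p, rfl⟩ := AddSubgroup.mem_zmultiples_iff.mp hy
  exact ⟨p, fun t ht => by simpa using hhy ht⟩

theorem Real.sin_half_eq_zero_iff_mem_zmultiples {x : ℝ} :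
    Real.sin (x / 2) = 0 ↔ x ∈ AddSubgroup.zmultiples (2 * Real.pi) := by
  rw [Real.sin_eq_zero_iff, AddSubgroup.mem_zmultiples_iff]
  refine exists_congr fun n => ?_
  rw [zsmul_eq_mul]
  constructor <;> intro hn <;> linarith

theorem IsPreconnected.exists_forall_eq_two_mul_int_mul_pi_of_sin_half_eq_zero {X : Type*}
    [TopologicalSpace X] {S : Set X} (hS : IsPreconnected S) {h : X → ℝ} (hc : ContinuousOn h S)
    (hz : ∀ t ∈ S, Real.sin (h t / 2) = 0) :
    ∃ p : ℤ, ∀ t ∈ S, h t = 2 * p * Real.pi := by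
  obtain ⟨p, hp⟩ := hS.exists_forall_eq_int_mul_of_mem_zmultiples hc
    fun t ht => Real.sin_half_eq_zero_iff_mem_zmultiples.mp (hz t ht)
  exact ⟨p, fun t ht => by rw [hp t ht]; ring⟩

theorem stmt_2_general (f g : ℝ → ℝ) (a b : ℝ)
    (hf : AnalyticOnNhd ℝ f (Set.Ioo a b))
    (hg : AnalyticOnNhd ℝ g (Set.Ioo a b))
    (h : ∀ t ∈ Set.Ioo a b, Real.cos (f t) = Real.cos (g t)) :
    (∃ p : ℤ, ∀ t ∈ Set.Ioo a b, f t = g t + 2 * p * Real.pi) ∨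
    (∃ p : ℤ, ∀ t ∈ Set.Ioo a b, f t = -g t + 2 * p * Real.pi) := by
  have hsum : AnalyticOnNhd ℝ (fun t => Real.sin ((f t + g t) / 2)) (Set.Ioo a b) :=
    Real.analyticOnNhd_sin.comp' ((hf.add hg).div_const)
  have hdiff : ContinuousOn (fun t => Real.sin ((f t - g t) / 2)) (Set.Ioo a b) :=
    Real.continuous_sin.comp_continuousOn ((hf.continuousOn.sub hg.continuousOn).div_const 2)
  have hprod : ∀ t ∈ Set.Ioo a b,
      Real.sin ((f t + g t) / 2) * Real.sin ((f t - g t) / 2) = 0 := by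
    intro t ht
    linarith [Real.cos_sub_cos (f t) (g t), h t ht]
  have hI : IsPreconnected (Set.Ioo a b) := isPreconnected_Ioo
  rcases hsum.eqOn_zero_or_eqOn_zero_of_mul_eq_zero hdiff isOpen_Ioo hI hprod
    with hsum_zero | hdiff_zero
  · obtain ⟨p, hp⟩ := hI.exists_forall_eq_two_mul_int_mul_pi_of_sin_half_eq_zero
      (h := fun t => f t + g t) (hf.continuousOn.add hg.continuousOn) hsum_zero
    exact Or.inr ⟨p, fun t ht => by linarith [hp t ht]⟩
  · obtain ⟨p, hp⟩ := hI.exists_forall_eq_two_mul_int_mul_pi_of_sin_half_eq_zero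
      (h := fun t => f t - g t) (hf.continuousOn.sub hg.continuousOn) hdiff_zero
    exact Or.inl ⟨p, fun t ht => by linarith [hp t ht]⟩

theorem stmt_2 (f g : ℝ → ℝ) (a b : ℝ) (hab : a < b)
    (hf : AnalyticOnNhd ℝ f (Set.Ioo a b))
    (hg : AnalyticOnNhd ℝ g (Set.Ioo a b))
    (h : ∀ t ∈ Set.Ioo a b, Real.cos (f t) = Real.cos (g t)) :
    (∃ p : ℤ, ∀ t ∈ Set.Ioo a b, f t = g t + 2 * p * Real.pi) ∨
    (∃ p : ℤ, ∀ t ∈ Set.Ioo a b, f t = -g t + 2 * p * Real.pi) :=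
  stmt_2_general f g a b hf hg h
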